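/- arXiv:2405.04850 — 3 statements merged into one kernel-verified Lean document; each statement's English description precedes it below -/
import Mathlib

section
/- Let ℰ be a Hilbert 𝒜-module over a C*-algebra 𝒜, let 𝒧 be a subset of ℰ, and let ω, ω_1, …, ω_n be positive linear functionals on 𝒜 such that ω = ∑_{j=1}^n λ_j ω_j with λ_j > 0 and ∑_{j=1}^n λ_j = 1. Then the closure of ι_ω(𝒧) in ℰ_ω equals the set of all z̃ ∈ ℰ_ω for which there exists a sequence {x_k} ⊆ 𝒧 such that lim_k (x_k + 𝒩_{ω_j}) = φ_j(z̃) in ℰ_{ω_j} for each 1 ≤ j ≤ n. -/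
open scoped ComplexOrder InnerProductSpace RightActions
open Filter Topology

/-- The class `CStarModule` as it stood in Mathlib (December 2024): a right Hilbert `A`-module,
with `A` acting through `Aᵐᵒᵖ`. Mathlib's `CStarModule` is now stated for a left action. -/
class RightCStarModule (A E : Type*) [NonUnitalSemiring A] [StarRing A] [Module ℂ A]
    [AddCommGroup E] [Module ℂ E] [PartialOrder A] [SMul Aᵐᵒᵖ E] [Norm A] [Norm E]
    extends Inner A E where
  inner_add_right {x} {y} {z} : inner x (y + z) = inner x y + inner x z
  inner_self_nonneg {x} : 0 ≤ inner x x
  inner_self {x} : inner x x = 0 ↔ x = 0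
  inner_op_smul_right {a : A} {x y : E} : inner x (y <• a) = inner x y * a
  inner_smul_right_complex {z : ℂ} {x} {y} : inner x (z • y) = z • inner x y
  star_inner x y : star (inner x y) = inner y x
  norm_eq_sqrt_norm_inner_self x : ‖x‖ = √‖inner x x‖

/-! Since `ω = ∑ λ_j ω_j`, the identity `‖ι_ω x‖² = ∑ λ_j ‖ι_{ω_j} x‖²` holds on `ι_ω(ℰ)` and
extends by density to `‖v‖² = ∑ λ_j ‖φ_j v‖²` on all of `ℰ_ω`. Hence a sequence in `ℰ_ω`
converges to `z` as soon as its images under every `φ_j` converge to `φ_j z`, and the closure of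
`ι_ω(𝒧)` consists of the limits of sequences in `ι_ω(𝒧)`. -/

theorem mem_closure_image_iff_seq_limit {α X : Type*} [TopologicalSpace X]
    [FrechetUrysohnSpace X] {f : α → X} {s : Set α} {z : X} :
    z ∈ closure (f '' s) ↔ ∃ x : ℕ → α, (∀ k, x k ∈ s) ∧ Tendsto (f ∘ x) atTop (𝓝 z) := by
  rw [mem_closure_iff_seq_limit]
  constructor
  · rintro ⟨y, hy, hyz⟩
    choose x hxs hxy using hy
    exact ⟨x, hxs, by simpa only [Function.comp_def, hxy] using hyz⟩
  · rintro ⟨x, hxs, hxz⟩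
    exact ⟨f ∘ x, fun k => Set.mem_image_of_mem f (hxs k), hxz⟩

section WeightedNormSq

variable {𝕜 F : Type*} [RCLike 𝕜] [NormedAddCommGroup F] [NormedSpace 𝕜 F]
  {J : Type*} [Fintype J] {G : J → Type*} [∀ j, NormedAddCommGroup (G j)]
  [∀ j, NormedSpace 𝕜 (G j)] {φ : ∀ j, F →L[𝕜] G j} {c : J → ℝ}

theorem norm_sq_eq_sum_of_denseRange {E : Type*} {ι : E → F} (hι : DenseRange ι)
    (h : ∀ x, ‖ι x‖ ^ 2 = ∑ j, c j * ‖φ j (ι x)‖ ^ 2) (v : F) :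
    ‖v‖ ^ 2 = ∑ j, c j * ‖φ j v‖ ^ 2 := by
  have hext : (fun v : F => ‖v‖ ^ 2) = fun v => ∑ j, c j * ‖φ j v‖ ^ 2 :=
    Continuous.ext_on hι (by fun_prop) (by fun_prop) (Set.forall_mem_range.2 h)
  exact congrFun hext v

theorem tendsto_iff_forall_tendsto_of_norm_sq_eq_sum
    (h : ∀ v, ‖v‖ ^ 2 = ∑ j, c j * ‖φ j v‖ ^ 2)
    {α : Type*} {l : Filter α} {u : α → F} {z : F} :
    Tendsto u l (𝓝 z) ↔ ∀ j, Tendsto (fun a => φ j (u a)) l (𝓝 (φ j z)) := by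
  refine ⟨fun hu j => ((φ j).continuous.tendsto z).comp hu, fun hφu => ?_⟩
  have hnorm : ∀ a, ‖u a - z‖ = √(∑ j, c j * ‖φ j (u a) - φ j z‖ ^ 2) := fun a => by
    rw [← Real.sqrt_sq (norm_nonneg (u a - z)), h]
    simp only [map_sub]
  have hlim : Tendsto (fun a => √(∑ j, c j * ‖φ j (u a) - φ j z‖ ^ 2)) l
      (𝓝 √(∑ j, c j * ‖φ j z - φ j z‖ ^ 2)) :=
    (tendsto_finsetSum _ fun j _ => (((hφu j).sub_const _).norm.pow 2).const_mul _).sqrt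
  rw [tendsto_iff_norm_sub_tendsto_zero]
  simpa [hnorm] using hlim

end WeightedNormSq

theorem closure_image_eq_of_finite_convex_combination_general
    {A E : Type*} [NonUnitalCStarAlgebra A] [PartialOrder A]
    [NormedAddCommGroup E] [NormedSpace ℂ E] [SMul Aᵐᵒᵖ E] [RightCStarModule A E]
    (L : Set E)
    (n : ℕ) (lam : Fin n → ℝ)
    (ω : A →L[ℂ] ℂ) (ωs : Fin n → (A →L[ℂ] ℂ))
    (hω : ∀ a : A, ω a = ∑ j, (lam j : ℂ) * ωs j a)
    -- an abstract model of the localization `ℰ_ω`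
    (F : Type*) [NormedAddCommGroup F] [InnerProductSpace ℂ F]
    (ι : E →ₗ[ℂ] F) (hι : DenseRange ι)
    (hinner : ∀ x y : E, ⟪ι x, ι y⟫_ℂ = ω ⟪x, y⟫_A)
    -- abstract models of the localizations `ℰ_{ω_j}`
    (Fj : Fin n → Type*) [∀ j, NormedAddCommGroup (Fj j)] [∀ j, InnerProductSpace ℂ (Fj j)]
    (ιj : ∀ j, E →ₗ[ℂ] Fj j)
    (hinnerj : ∀ j (x y : E), ⟪ιj j x, ιj j y⟫_ℂ = ωs j ⟪x, y⟫_A)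
    -- the maps `φ_j`
    (φ : ∀ j, F →L[ℂ] Fj j) (hφ : ∀ j (x : E), φ j (ι x) = ιj j x) :
    closure (ι '' L) =
      {z : F | ∃ x : ℕ → E, (∀ k, x k ∈ L) ∧
        ∀ j, Tendsto (fun k => ιj j (x k)) atTop (nhds (φ j z))} := by
  have hnorm : ∀ x, ‖ι x‖ ^ 2 = ∑ j, lam j * ‖φ j (ι x)‖ ^ 2 := fun x => by
    have h := hinner x x
    simp only [hω, ← hinnerj, inner_self_eq_norm_sq_to_K] at h
    simp only [hφ]
    apply Complex.ofReal_injective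
    push_cast
    exact h
  have hF := norm_sq_eq_sum_of_denseRange hι hnorm
  ext z
  simp only [mem_closure_image_iff_seq_limit, tendsto_iff_forall_tendsto_of_norm_sq_eq_sum hF,
    Function.comp_apply, hφ, Set.mem_ofPred_eq]

/-- **Theorem 2.2.** Let `𝒧 ⊆ ℰ` and `ω = ∑_{j=1}^n λ_j ω_j` with `λ_j > 0`,
`∑ λ_j = 1`, `ω_j` positive linear functionals.  Then the closure of `ι_ω(𝒧)` in `ℰ_ω`
equals the set of `z̃ ∈ ℰ_ω` for which there is a sequence `{x_k} ⊆ 𝒧` with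
`lim_k (x_k + 𝒩_{ω_j}) = φ_j(z̃)` in `ℰ_{ω_j}` for each `1 ≤ j ≤ n`.  The localizations are
modelled abstractly, and `φ_j` is determined by `φ_j ∘ ι_ω = ι_{ω_j}`. -/
theorem closure_image_eq_of_finite_convex_combination
    {A E : Type*} [NonUnitalCStarAlgebra A] [PartialOrder A] [StarOrderedRing A]
    [NormedAddCommGroup E] [NormedSpace ℂ E] [SMul Aᵐᵒᵖ E] [RightCStarModule A E] [CompleteSpace E]
    (L : Set E)
    (n : ℕ) (lam : Fin n → ℝ) (hlam : ∀ j, 0 < lam j) (hlam1 : ∑ j, lam j = 1)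
    (ω : A →L[ℂ] ℂ) (ωs : Fin n → (A →L[ℂ] ℂ))
    (hpos : ∀ j (a : A), 0 ≤ a → 0 ≤ ωs j a)
    (hω : ∀ a : A, ω a = ∑ j, (lam j : ℂ) * ωs j a)
    -- an abstract model of the localization `ℰ_ω`
    (F : Type*) [NormedAddCommGroup F] [InnerProductSpace ℂ F] [CompleteSpace F]
    (ι : E →ₗ[ℂ] F) (hι : DenseRange ι)
    (hinner : ∀ x y : E, ⟪ι x, ι y⟫_ℂ = ω ⟪x, y⟫_A)
    -- abstract models of the localizations `ℰ_{ω_j}`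
    (Fj : Fin n → Type*) [∀ j, NormedAddCommGroup (Fj j)] [∀ j, InnerProductSpace ℂ (Fj j)]
    [∀ j, CompleteSpace (Fj j)]
    (ιj : ∀ j, E →ₗ[ℂ] Fj j) (hιj : ∀ j, DenseRange (ιj j))
    (hinnerj : ∀ j (x y : E), ⟪ιj j x, ιj j y⟫_ℂ = ωs j ⟪x, y⟫_A)
    -- the maps `φ_j`
    (φ : ∀ j, F →L[ℂ] Fj j) (hφ : ∀ j (x : E), φ j (ι x) = ιj j x) :
    closure (ι '' L) =
      {z : F | ∃ x : ℕ → E, (∀ k, x k ∈ L) ∧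
        ∀ j, Tendsto (fun k => ιj j (x k)) atTop (nhds (φ j z))} :=
  closure_image_eq_of_finite_convex_combination_general L n lam ω ωs hω F ι hι hinner Fj ιj hinnerj
    φ hφ
end

section
/- Let ℰ be a Hilbert 𝒜-module over a C*-algebra 𝒜, and let ℋ and 𝒦 be closed submodules of ℰ such that ℋ ∩ 𝒦 is orthogonally complemented in ℰ. Let ω_1, …, ω_n be positive linear functionals on 𝒜 such that, for each j, the closure of ι_{ω_j}(ℋ ∩ 𝒦) in ℰ_{ω_j} equals the intersection of the closures of ι_{ω_j}(ℋ) and ι_{ω_j}(𝒦) in ℰ_{ω_j}. Then for every ω in the convex hull of {ω_1, …, ω_n}, the closure of ι_ω(ℋ ∩ 𝒦) in ℰ_ω equals the intersection of the closures of ι_ω(ℋ) and ι_ω(𝒦) in ℰ_ω. -/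
/-!
Write `ι` for `ι_ω` and `ιⱼ` for `ι_{ω_j}`, with `ω = ∑ λⱼ ωⱼ`. Then
`‖ι x‖² = ∑ λⱼ ‖ιⱼ x‖²`, so `x ↦ λⱼ • ιⱼ x` extends from the dense range of `ι` to a bounded
operator `Tⱼ : ℰ_ω → ℰ_{ω_j}`, and `⟪f, ι z⟫ = ∑ⱼ ⟪Tⱼ f, ιⱼ z⟫`. If `f` lies in the closures of
`ι(ℋ)` and `ι(𝒦)`, then `Tⱼ f` lies in those of `ιⱼ(ℋ)` and `ιⱼ(𝒦)`, hence in the closure of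
`ιⱼ(ℋ ∩ 𝒦)`, which is orthogonal to `ιⱼ z` for `z ∈ (ℋ ∩ 𝒦)^⊥`; so `f ⊥ ι((ℋ ∩ 𝒦)^⊥)`. Since
`ℰ = (ℋ ∩ 𝒦) ⊕ (ℋ ∩ 𝒦)^⊥` and `ι` has dense range, the closure of `ι(ℋ ∩ 𝒦)` is exactly the
orthogonal complement of `ι((ℋ ∩ 𝒦)^⊥)`, so `f` lies in it.
-/
open scoped ComplexOrder InnerProductSpace RightActions

universe v

namespace Submodule

variable {𝕜 F : Type*} [RCLike 𝕜] [NormedAddCommGroup F] [InnerProductSpace 𝕜 F] [CompleteSpace F]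

theorem orthogonal_eq_topologicalClosure_of_le_orthogonal {M N : Submodule 𝕜 F}
    (hNM : N ≤ Mᗮ) (hMN : (M ⊔ N)ᗮ = ⊥) : Nᗮ = M.topologicalClosure := by
  rw [← orthogonal_orthogonal_eq_closure,
    ← sup_orthogonal_inf_of_hasOrthogonalProjection (orthogonal_le hNM),
    triorthogonal_eq_orthogonal, inf_orthogonal, hMN, sup_bot_eq]

end Submodule

section Gram

variable {𝕜 E F : Type*} [RCLike 𝕜] [AddCommGroup E] [Module 𝕜 E]
  [NormedAddCommGroup F] [InnerProductSpace 𝕜 F]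

theorem mem_closure_image_of_inner_eq_zero [CompleteSpace F] {ι : E →ₗ[𝕜] F}
    (hι : DenseRange ι) {S : Submodule 𝕜 E} {Z : Set E}
    (hSZ : ∀ x, ∃ y ∈ S, ∃ z ∈ Z, x = y + z) (hortho : ∀ y ∈ S, ∀ z ∈ Z, ⟪ι y, ι z⟫_𝕜 = 0)
    {f : F} (hf : ∀ z ∈ Z, ⟪f, ι z⟫_𝕜 = 0) : f ∈ closure (ι '' S) := by
  set N := Submodule.span 𝕜 (ι '' Z)
  have hNM : N ≤ (S.map ι)ᗮ := by
    refine Submodule.span_le.2 ?_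
    rintro _ ⟨z, hz, rfl⟩
    refine (Submodule.mem_orthogonal _ _).2 ?_
    rintro _ ⟨y, hy, rfl⟩
    exact hortho y hy z hz
  have hrange : LinearMap.range ι ≤ S.map ι ⊔ N := by
    rintro _ ⟨x, rfl⟩
    obtain ⟨y, hy, z, hz, rfl⟩ := hSZ x
    rw [map_add]
    exact Submodule.add_mem_sup (Submodule.mem_map_of_mem hy)
      (Submodule.subset_span (Set.mem_image_of_mem ι hz))
  have hdense : (S.map ι ⊔ N)ᗮ = ⊥ := by
    rw [← Submodule.topologicalClosure_eq_top_iff, eq_top_iff]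
    refine le_trans (Submodule.dense_iff_topologicalClosure_eq_top.1 ?_).ge
      (Submodule.topologicalClosure_mono hrange)
    rwa [LinearMap.coe_range]
  have hfN : f ∈ Nᗮ := by
    refine (Submodule.mem_orthogonal' _ _).2 fun v hv => ?_
    refine Submodule.span_induction ?_ ?_ ?_ ?_ hv
    · rintro _ ⟨z, hz, rfl⟩
      exact hf z hz
    · exact inner_zero_right f
    · intro u w _ _ hu hw
      rw [inner_add_right, hu, hw, add_zero]
    · intro c u _ hu
      rw [inner_smul_right, hu, mul_zero]
  rw [Submodule.orthogonal_eq_topologicalClosure_of_le_orthogonal hNM hdense] at hfN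
  rwa [← SetLike.mem_coe, Submodule.topologicalClosure_coe, Submodule.map_coe] at hfN

variable {J : Type*} [Fintype J] {Fj : J → Type*} [∀ j, NormedAddCommGroup (Fj j)]
  [∀ j, InnerProductSpace 𝕜 (Fj j)] {ι : E →ₗ[𝕜] F} {ιj : ∀ j, E →ₗ[𝕜] Fj j} {lam : J → ℝ}

theorem norm_smul_le_of_inner_eq_sum (hlam : ∀ j, 0 ≤ lam j)
    (hgram : ∀ x y, ⟪ι x, ι y⟫_𝕜 = ∑ j, (lam j : 𝕜) * ⟪ιj j x, ιj j y⟫_𝕜) (j : J) (x : E) :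
    ‖(lam j : 𝕜) • ιj j x‖ ≤ √(lam j) * ‖ι x‖ := by
  have hsq : ‖ι x‖ ^ 2 = ∑ k, lam k * ‖ιj k x‖ ^ 2 := by
    have := hgram x x
    simp only [inner_self_eq_norm_sq_to_K] at this
    exact_mod_cast this
  have hle : lam j * ‖ιj j x‖ ^ 2 ≤ ‖ι x‖ ^ 2 := hsq ▸
    Finset.single_le_sum (f := fun k => lam k * ‖ιj k x‖ ^ 2)
      (fun k _ => mul_nonneg (hlam k) (sq_nonneg _)) (Finset.mem_univ j)
  have hsqrt := Real.sqrt_le_sqrt hle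
  rw [Real.sqrt_mul (hlam j), Real.sqrt_sq (norm_nonneg _), Real.sqrt_sq (norm_nonneg _)] at hsqrt
  calc ‖(lam j : 𝕜) • ιj j x‖ = √(lam j) * (√(lam j) * ‖ιj j x‖) := by
        rw [norm_smul, RCLike.norm_ofReal, abs_of_nonneg (hlam j), ← mul_assoc,
          Real.mul_self_sqrt (hlam j)]
    _ ≤ √(lam j) * ‖ι x‖ := by gcongr

variable [∀ j, CompleteSpace (Fj j)]

theorem extendOfNorm_smul_apply_of_inner_eq_sum (hι : DenseRange ι) (hlam : ∀ j, 0 ≤ lam j)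
    (hgram : ∀ x y, ⟪ι x, ι y⟫_𝕜 = ∑ j, (lam j : 𝕜) * ⟪ιj j x, ιj j y⟫_𝕜) (j : J) (x : E) :
    ((lam j : 𝕜) • ιj j).extendOfNorm ι (ι x) = (lam j : 𝕜) • ιj j x :=
  LinearMap.extendOfNorm_eq hι ⟨_, norm_smul_le_of_inner_eq_sum hlam hgram j⟩ x

theorem inner_eq_sum_inner_extendOfNorm (hι : DenseRange ι) (hlam : ∀ j, 0 ≤ lam j)
    (hgram : ∀ x y, ⟪ι x, ι y⟫_𝕜 = ∑ j, (lam j : 𝕜) * ⟪ιj j x, ιj j y⟫_𝕜) (f : F) (y : E) :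
    ⟪f, ι y⟫_𝕜 = ∑ j, ⟪((lam j : 𝕜) • ιj j).extendOfNorm ι f, ιj j y⟫_𝕜 := by
  refine hι.induction_on f (isClosed_eq (by fun_prop) (by fun_prop)) fun x => ?_
  simp only [extendOfNorm_smul_apply_of_inner_eq_sum hι hlam hgram, inner_smul_left,
    RCLike.conj_ofReal, hgram]

theorem inner_eq_zero_of_mem_closure_inter (hι : DenseRange ι) (hlam : ∀ j, 0 ≤ lam j)
    (hgram : ∀ x y, ⟪ι x, ι y⟫_𝕜 = ∑ j, (lam j : 𝕜) * ⟪ιj j x, ιj j y⟫_𝕜)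
    {H K : Submodule 𝕜 E} (hj : ∀ j, closure (ιj j '' (H ⊓ K : Submodule 𝕜 E)) =
      closure (ιj j '' (H : Set E)) ∩ closure (ιj j '' (K : Set E)))
    {f : F} (hfH : f ∈ closure (ι '' (H : Set E))) (hfK : f ∈ closure (ι '' (K : Set E)))
    {z : E} (hz : ∀ j, ∀ w ∈ H ⊓ K, ⟪ιj j w, ιj j z⟫_𝕜 = 0) : ⟪f, ι z⟫_𝕜 = 0 := by
  rw [inner_eq_sum_inner_extendOfNorm hι hlam hgram]
  refine Finset.sum_eq_zero fun j _ => ?_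
  set T := ((lam j : 𝕜) • ιj j).extendOfNorm ι
  have hT : ∀ {S : Submodule 𝕜 E}, f ∈ closure (ι '' (S : Set E)) →
      T f ∈ closure (ιj j '' (S : Set E)) := by
    refine fun {S} hf => map_mem_closure T.continuous hf ?_
    rintro _ ⟨x, hx, rfl⟩
    refine ⟨(lam j : 𝕜) • x, S.smul_mem _ hx, ?_⟩
    rw [map_smul, extendOfNorm_smul_apply_of_inner_eq_sum hι hlam hgram]
  have hTf : T f ∈ closure (ιj j '' (H ⊓ K : Submodule 𝕜 E)) := (hj j).symm ▸ ⟨hT hfH, hT hfK⟩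
  refine closure_minimal (t := {v | ⟪v, ιj j z⟫_𝕜 = 0}) ?_
    (isClosed_eq (by fun_prop) continuous_const) hTf
  rintro _ ⟨w, hw, rfl⟩
  exact hz j w hw

end Gram

/-- The localization `ℰ_ω` is modelled by an arbitrary Hilbert space `F` with a map `ι` of dense
range satisfying `⟪ι x, ι y⟫ = ω ⟪x, y⟫_A`, and likewise for each `ω_j`. -/
theorem closure_inter_localization_of_convexHull_general
    {A E : Type*} [NonUnitalCStarAlgebra A] [PartialOrder A]
    [NormedAddCommGroup E] [NormedSpace ℂ E] [SMul Aᵐᵒᵖ E] [RightCStarModule A E]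
    -- `ℋ` and `𝒦` are closed submodules of `ℰ`
    (H K : Submodule ℂ E)
    -- `ℋ ∩ 𝒦` is orthogonally complemented in `ℰ`
    (hcompl : ∀ x : E, ∃ y ∈ H ⊓ K, ∃ z : E,
      (∀ w ∈ H ⊓ K, ⟪w, z⟫_A = 0) ∧ x = y + z)
    -- the positive linear functionals `ω_1, …, ω_n`
    (n : ℕ) (ωs : Fin n → (A →L[ℂ] ℂ))
    -- abstract models of the localizations `ℰ_{ω_j}`
    (Fj : Fin n → Type*) [∀ j, NormedAddCommGroup (Fj j)] [∀ j, InnerProductSpace ℂ (Fj j)]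
    [∀ j, CompleteSpace (Fj j)]
    (ιj : ∀ j, E →ₗ[ℂ] Fj j)
    (hinnerj : ∀ j (x y : E), ⟪ιj j x, ιj j y⟫_ℂ = ωs j ⟪x, y⟫_A)
    -- the hypothesis `(ℋ ∩ 𝒦)_{ω_j} = ℋ_{ω_j} ∩ 𝒦_{ω_j}` for each `j`
    (hj : ∀ j, closure (ιj j '' ((H ⊓ K : Submodule ℂ E) : Set E)) =
      closure (ιj j '' (H : Set E)) ∩ closure (ιj j '' (K : Set E))) :
    -- conclusion: the same holds for every `ω` in the convex hull of `{ω_1, …, ω_n}`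
    ∀ (lam : Fin n → ℝ), (∀ j, 0 ≤ lam j) → ∑ j, lam j = 1 →
    ∀ (ω : A →L[ℂ] ℂ), (∀ a : A, ω a = ∑ j, (lam j : ℂ) * ωs j a) →
    ∀ (F : Type v) [NormedAddCommGroup F] [InnerProductSpace ℂ F] [CompleteSpace F]
      (ι : E →ₗ[ℂ] F), DenseRange ι → (∀ x y : E, ⟪ι x, ι y⟫_ℂ = ω ⟪x, y⟫_A) →
      closure (ι '' ((H ⊓ K : Submodule ℂ E) : Set E)) =
        closure (ι '' (H : Set E)) ∩ closure (ι '' (K : Set E)) := by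
  intro lam hlam _ ω hω F _ _ _ ι hdense hinner
  have hgram : ∀ x y, ⟪ι x, ι y⟫_ℂ = ∑ j, (lam j : ℂ) * ⟪ιj j x, ιj j y⟫_ℂ := by
    simp only [hinner, hω, hinnerj, implies_true]
  refine Set.Subset.antisymm (Set.subset_inter (closure_mono (Set.image_mono inf_le_left))
    (closure_mono (Set.image_mono inf_le_right))) ?_
  rintro f ⟨hfH, hfK⟩
  refine mem_closure_image_of_inner_eq_zero hdense (Z := {z | ∀ w ∈ H ⊓ K, ⟪w, z⟫_A = 0})
    hcompl (fun y hy z hz => by rw [hinner, hz y hy, map_zero]) fun z hz => ?_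
  exact inner_eq_zero_of_mem_closure_inter hdense hlam hgram hj hfH hfK
    fun j w hw => by rw [hinnerj, hz w hw, map_zero]

/-- **Corollary 2.4.** Let `ℋ, 𝒦` be closed submodules of `ℰ` with `ℋ ∩ 𝒦`
orthogonally complemented, and let `ω_1, …, ω_n` be positive linear functionals such that
`closure ι_{ω_j}(ℋ ∩ 𝒦) = closure ι_{ω_j}(ℋ) ∩ closure ι_{ω_j}(𝒦)` for each `j`.  Then the
same equality holds for every `ω` in the convex hull of `{ω_1, …, ω_n}`; here the
localization of any such `ω` is modelled abstractly by an arbitrary Hilbert space `F` with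
a densely-ranged map `ι` satisfying `(ι x, ι y) = ω⟨x,y⟩`. -/
theorem closure_inter_localization_of_convexHull
    {A E : Type*} [NonUnitalCStarAlgebra A] [PartialOrder A] [StarOrderedRing A]
    [NormedAddCommGroup E] [NormedSpace ℂ E] [SMul Aᵐᵒᵖ E] [RightCStarModule A E] [CompleteSpace E]
    -- `ℋ` and `𝒦` are closed submodules of `ℰ`
    (H K : Submodule ℂ E) (hHclosed : IsClosed (H : Set E)) (hKclosed : IsClosed (K : Set E))
    (hHA : ∀ (a : A) (x : E), x ∈ H → x <• a ∈ H)
    (hKA : ∀ (a : A) (x : E), x ∈ K → x <• a ∈ K)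
    -- `ℋ ∩ 𝒦` is orthogonally complemented in `ℰ`
    (hcompl : ∀ x : E, ∃ y ∈ H ⊓ K, ∃ z : E,
      (∀ w ∈ H ⊓ K, ⟪w, z⟫_A = 0) ∧ x = y + z)
    -- the positive linear functionals `ω_1, …, ω_n`
    (n : ℕ) (ωs : Fin n → (A →L[ℂ] ℂ))
    (hpos : ∀ j (a : A), 0 ≤ a → 0 ≤ ωs j a)
    -- abstract models of the localizations `ℰ_{ω_j}`
    (Fj : Fin n → Type*) [∀ j, NormedAddCommGroup (Fj j)] [∀ j, InnerProductSpace ℂ (Fj j)]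
    [∀ j, CompleteSpace (Fj j)]
    (ιj : ∀ j, E →ₗ[ℂ] Fj j) (hιj : ∀ j, DenseRange (ιj j))
    (hinnerj : ∀ j (x y : E), ⟪ιj j x, ιj j y⟫_ℂ = ωs j ⟪x, y⟫_A)
    -- the hypothesis `(ℋ ∩ 𝒦)_{ω_j} = ℋ_{ω_j} ∩ 𝒦_{ω_j}` for each `j`
    (hj : ∀ j, closure (ιj j '' ((H ⊓ K : Submodule ℂ E) : Set E)) =
      closure (ιj j '' (H : Set E)) ∩ closure (ιj j '' (K : Set E))) :
    -- conclusion: the same holds for every `ω` in the convex hull of `{ω_1, …, ω_n}`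
    ∀ (lam : Fin n → ℝ), (∀ j, 0 ≤ lam j) → ∑ j, lam j = 1 →
    ∀ (ω : A →L[ℂ] ℂ), (∀ a : A, ω a = ∑ j, (lam j : ℂ) * ωs j a) →
    ∀ (F : Type v) [NormedAddCommGroup F] [InnerProductSpace ℂ F] [CompleteSpace F]
      (ι : E →ₗ[ℂ] F), DenseRange ι → (∀ x y : E, ⟪ι x, ι y⟫_ℂ = ω ⟪x, y⟫_A) →
      closure (ι '' ((H ⊓ K : Submodule ℂ E) : Set E)) =
        closure (ι '' (H : Set E)) ∩ closure (ι '' (K : Set E)) :=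
  closure_inter_localization_of_convexHull_general H K hcompl n ωs Fj ιj hinnerj hj
end

section
/- Let ℰ be a Hilbert 𝒜-module over a C*-algebra 𝒜, let 𝒧 be a convex subset of ℰ, and let ω = ∑_{j=1}^∞ λ_j ω_j, where λ_j > 0, ∑_{j=1}^∞ λ_j = 1, and the ω_j are positive linear functionals on 𝒜 with sup_j ‖ω_j‖ < ∞ (for instance, states). Then the closure of ι_ω(𝒧) in ℰ_ω equals the set of all z̃ ∈ ℰ_ω for which there exists a sequence {x_n} ⊆ 𝒧 such that the sequence {x_n + 𝒩_ω} is bounded in ℰ_ω and lim_n (x_n + 𝒩_{ω_j}) = φ_j(z̃) in ℰ_{ω_j} for every j ≥ 1. -/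
/-!
Bessel's inequality `∑ λ_j ‖φ_j w‖² ≤ ‖w‖²` holds on `ι_ω(ℰ)`, where it is Parseval's identity,
hence on all of `ℰ_ω` by density. So if every `φ_j w` vanishes then `‖ι x‖ ≤ ‖ι x - w‖` for all
`x`, and letting `ι x → w` gives `w = 0`: the `φ_j` separate points, i.e. the ranges of their
adjoints span a dense subspace. Testing against that subspace, a bounded sequence `ι x_n` with
`φ_j (ι x_n) → φ_j z` for every `j` converges weakly to `z`, and by Mazur's theorem weak limits
of points of the convex set `ι_ω(𝒧)` lie in its norm closure.
-/

open scoped ComplexOrder InnerProductSpace RightActions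
open Filter

/-- The Hilbert C⋆-module class as it stood in the older Mathlib: a right `A`-module
(`SMul Aᵐᵒᵖ E`) with inner product `A`-linear on the right, `⟪x, y <• a⟫ = ⟪x, y⟫ * a`. -/
class CStarModuleRight (A E : Type*) [NonUnitalSemiring A] [StarRing A] [Module ℂ A]
    [AddCommGroup E] [Module ℂ E] [PartialOrder A] [SMul Aᵐᵒᵖ E] [Norm A] [Norm E]
    extends Inner A E where
  inner_add_right {x} {y} {z} : inner x (y + z) = inner x y + inner x z
  inner_self_nonneg {x} : 0 ≤ inner x x
  inner_self {x} : inner x x = 0 ↔ x = 0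
  inner_op_smul_right {a : A} {x y : E} : inner x (y <• a) = inner x y * a
  inner_smul_right_complex {z : ℂ} {x} {y} : inner x (z • y) = z • inner x y
  star_inner x y : star (inner x y) = inner y x
  norm_eq_sqrt_norm_inner_self x : ‖x‖ = Real.sqrt ‖inner x x‖

open Topology ContinuousLinearMap

section Bessel

variable {𝕜 E F J : Type*} {G : J → Type*} [NontriviallyNormedField 𝕜]
  [NormedAddCommGroup F] [NormedSpace 𝕜 F] [∀ j, NormedAddCommGroup (G j)]
  [∀ j, NormedSpace 𝕜 (G j)] {ι : E → F} {c : J → ℝ} {T : ∀ j, F →L[𝕜] G j}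

theorem sum_mul_norm_sq_le_of_denseRange (hι : DenseRange ι) (hc : ∀ j, 0 ≤ c j)
    (hT : ∀ x, HasSum (fun j => c j * ‖T j (ι x)‖ ^ 2) (‖ι x‖ ^ 2)) (s : Finset J) (w : F) :
    ∑ j ∈ s, c j * ‖T j w‖ ^ 2 ≤ ‖w‖ ^ 2 :=
  hι.induction_on w (isClosed_le (by fun_prop) (by fun_prop)) fun x =>
    sum_le_hasSum s (fun j _ => mul_nonneg (hc j) (sq_nonneg _)) (hT x)

theorem eq_zero_of_forall_apply_eq_zero_of_denseRange (hι : DenseRange ι) (hc : ∀ j, 0 ≤ c j)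
    (hT : ∀ x, HasSum (fun j => c j * ‖T j (ι x)‖ ^ 2) (‖ι x‖ ^ 2)) {w : F}
    (hw : ∀ j, T j w = 0) : w = 0 := by
  have hnorm_le : ∀ x, ‖ι x‖ ^ 2 ≤ ‖ι x - w‖ ^ 2 := fun x => by
    rw [← (hT x).tsum_eq]
    refine Real.tsum_le_of_sum_le (fun j => mul_nonneg (hc j) (sq_nonneg _)) fun s => ?_
    simpa only [map_sub, hw, sub_zero] using
      sum_mul_norm_sq_le_of_denseRange hι hc hT s (ι x - w)
  have := hι.induction_on (p := fun v => ‖v‖ ^ 2 ≤ ‖v - w‖ ^ 2) w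
    (isClosed_le (by fun_prop) (by fun_prop)) hnorm_le
  simpa using this

end Bessel

section WeakConvergence

variable {𝕜 F I : Type*} [RCLike 𝕜] [NormedAddCommGroup F] [InnerProductSpace 𝕜 F]

theorem topologicalClosure_span_iUnion_range_adjoint_eq_top [CompleteSpace F] {J : Type*}
    {G : J → Type*} [∀ j, NormedAddCommGroup (G j)] [∀ j, InnerProductSpace 𝕜 (G j)]
    [∀ j, CompleteSpace (G j)] {T : ∀ j, F →L[𝕜] G j} (hT : ∀ w, (∀ j, T j w = 0) → w = 0) :
    (Submodule.span 𝕜 (⋃ j, Set.range (adjoint (T j)))).topologicalClosure = ⊤ := by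
  rw [Submodule.topologicalClosure_eq_top_iff, eq_bot_iff]
  refine fun w hw => hT w fun j => ?_
  have hmem : adjoint (T j) (T j w) ∈ Submodule.span 𝕜 (⋃ j, Set.range (adjoint (T j))) :=
    Submodule.subset_span (Set.mem_iUnion.2 ⟨j, T j w, rfl⟩)
  have := Submodule.inner_right_of_mem_orthogonal hmem hw
  rwa [adjoint_inner_left, inner_self_eq_zero] at this

theorem tendsto_inner_of_topologicalClosure_span_eq_top {S : Set F}
    (hS : (Submodule.span 𝕜 S).topologicalClosure = ⊤) {l : Filter I} {u : I → F} {C : ℝ}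
    (hu : ∀ k, ‖u k‖ ≤ C) {z : F} (h : ∀ y ∈ S, Tendsto (fun k => ⟪y, u k⟫_𝕜) l (𝓝 ⟪y, z⟫_𝕜))
    (w : F) : Tendsto (fun k => ⟪w, u k⟫_𝕜) l (𝓝 ⟪w, z⟫_𝕜) := by
  have hlip : ∀ k, LipschitzWith C.toNNReal fun y => ⟪y, u k⟫_𝕜 := fun k =>
    LipschitzWith.of_dist_le_mul fun y y' => by
      rw [dist_eq_norm, dist_eq_norm, ← inner_sub_left, mul_comm]
      exact (norm_inner_le_norm _ _).trans
        (mul_le_mul_of_nonneg_left ((hu k).trans (Real.le_coe_toNNReal C)) (norm_nonneg _))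
  have hclosed : IsClosed {y | Tendsto (fun k => ⟪y, u k⟫_𝕜) l (𝓝 ⟪y, z⟫_𝕜)} :=
    (LipschitzWith.uniformEquicontinuous _ _ hlip).equicontinuous.isClosed_setOfPred_tendsto
      (by fun_prop)
  have hspan : ∀ y ∈ Submodule.span 𝕜 S, Tendsto (fun k => ⟪y, u k⟫_𝕜) l (𝓝 ⟪y, z⟫_𝕜) := by
    intro y hy
    induction hy using Submodule.span_induction with
    | mem y hy => exact h y hy
    | zero => simpa only [inner_zero_left] using tendsto_const_nhds
    | add y y' _ _ hy hy' => simpa only [inner_add_left] using hy.add hy'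
    | smul a y _ hy => simpa only [inner_smul_left] using hy.const_mul _
  have := closure_minimal hspan hclosed
  rw [← Submodule.topologicalClosure_coe, hS] at this
  exact this trivial

theorem mem_closure_of_tendsto_inner [CompleteSpace F] [NormedSpace ℝ F] [IsScalarTower ℝ 𝕜 F]
    {s : Set F} (hs : Convex ℝ s) {l : Filter I} [l.NeBot] {u : I → F} (hu : ∀ k, u k ∈ s)
    {z : F} (h : ∀ v, Tendsto (fun k => ⟪v, u k⟫_𝕜) l (𝓝 ⟪v, z⟫_𝕜)) : z ∈ closure s := by
  by_contra hz
  obtain ⟨f, a, hfz, hfs⟩ :=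
    RCLike.geometric_hahn_banach_point_closed (𝕜 := 𝕜) hs.closure isClosed_closure hz
  have hf : Tendsto (fun k => RCLike.re (f (u k))) l (𝓝 (RCLike.re (f z))) := by
    simpa only [InnerProductSpace.toDual_symm_apply, Function.comp_def] using
      (RCLike.continuous_re.tendsto _).comp (h ((InnerProductSpace.toDual 𝕜 F).symm f))
  exact hfz.not_ge (ge_of_tendsto hf (Eventually.of_forall fun k =>
    (hfs _ (subset_closure (hu k))).le))

end WeakConvergence

theorem closure_image_eq_of_sigma_convex_combination_general
    {A E : Type*} [NonUnitalCStarAlgebra A] [PartialOrder A]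
    [NormedAddCommGroup E] [NormedSpace ℂ E] [SMul Aᵐᵒᵖ E] [CStarModuleRight A E]
    -- `𝒧` is a convex subset of `ℰ`
    (L : Set E) (hL : Convex ℝ L)
    (lam : ℕ → ℝ) (hlam : ∀ j, 0 < lam j)
    (ω : A →L[ℂ] ℂ) (ωs : ℕ → (A →L[ℂ] ℂ))
    (hω : ∀ a : A, HasSum (fun j => (lam j : ℂ) * ωs j a) (ω a))
    -- an abstract model of the localization `ℰ_ω`
    (F : Type*) [NormedAddCommGroup F] [InnerProductSpace ℂ F] [CompleteSpace F]
    (ι : E →ₗ[ℂ] F) (hι : DenseRange ι)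
    (hinner : ∀ x y : E, ⟪ι x, ι y⟫_ℂ = ω ⟪x, y⟫_A)
    -- abstract models of the localizations `ℰ_{ω_j}`
    (Fj : ℕ → Type*) [∀ j, NormedAddCommGroup (Fj j)] [∀ j, InnerProductSpace ℂ (Fj j)]
    [∀ j, CompleteSpace (Fj j)]
    (ιj : ∀ j, E →ₗ[ℂ] Fj j)
    (hinnerj : ∀ j (x y : E), ⟪ιj j x, ιj j y⟫_ℂ = ωs j ⟪x, y⟫_A)
    -- the maps `φ_j`
    (φ : ∀ j, F →L[ℂ] Fj j) (hφ : ∀ j (x : E), φ j (ι x) = ιj j x) :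
    closure (ι '' L) =
      {z : F | ∃ x : ℕ → E, (∀ k, x k ∈ L) ∧ (∃ C : ℝ, ∀ k, ‖ι (x k)‖ ≤ C) ∧
        ∀ j, Tendsto (fun k => ιj j (x k)) atTop (nhds (φ j z))} := by
  have hparseval : ∀ x, HasSum (fun j => lam j * ‖φ j (ι x)‖ ^ 2) (‖ι x‖ ^ 2) := fun x => by
    have h := hω ⟪x, x⟫_A
    simp only [← hinner, ← hinnerj, inner_self_eq_norm_sq_to_K, ← hφ] at h
    exact Complex.hasSum_ofReal.mp (by push_cast; exact h)
  have hker : ∀ w, (∀ j, φ j w = 0) → w = 0 := fun w =>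
    eq_zero_of_forall_apply_eq_zero_of_denseRange hι (fun j => (hlam j).le) hparseval
  ext z
  constructor
  · intro hz
    obtain ⟨y, hyL, hyz⟩ := mem_closure_iff_seq_limit.mp hz
    choose x hxL hxy using hyL
    obtain rfl : (fun k => ι (x k)) = y := funext hxy
    obtain ⟨C, hC⟩ := hyz.norm.bddAbove_range
    refine ⟨x, hxL, ⟨C, fun k => hC ⟨k, rfl⟩⟩, fun j => ?_⟩
    simpa only [← hφ, Function.comp_def] using ((φ j).continuous.tendsto z).comp hyz
  · rintro ⟨x, hxL, ⟨C, hC⟩, hx⟩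
    refine mem_closure_of_tendsto_inner (𝕜 := ℂ) (l := atTop)
      (hL.linear_image (ι.restrictScalars ℝ)) (fun k => ⟨x k, hxL k, rfl⟩)
      (tendsto_inner_of_topologicalClosure_span_eq_top
        (topologicalClosure_span_iUnion_range_adjoint_eq_top hker) hC ?_)
    rintro _ ⟨_, ⟨j, rfl⟩, g, rfl⟩
    simpa only [adjoint_inner_left, hφ] using tendsto_const_nhds.inner (hx j)

/-- **Theorem 2.5.** Let `𝒧` be a convex subset of `ℰ` and
`ω = ∑_{j=1}^∞ λ_j ω_j` with `λ_j > 0`, `∑ λ_j = 1`, and `ω_j` positive linear functionals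
with `sup_j ‖ω_j‖ < ∞`.  Then `closure ι_ω(𝒧)` equals the set of `z̃ ∈ ℰ_ω` for which
there is a sequence `{x_n} ⊆ 𝒧` with `{x_n + 𝒩_ω}` bounded in `ℰ_ω` and
`lim_n (x_n + 𝒩_{ω_j}) = φ_j(z̃)` in `ℰ_{ω_j}` for every `j ≥ 1`. -/
theorem closure_image_eq_of_sigma_convex_combination
    {A E : Type*} [NonUnitalCStarAlgebra A] [PartialOrder A] [StarOrderedRing A]
    [NormedAddCommGroup E] [NormedSpace ℂ E] [SMul Aᵐᵒᵖ E] [CStarModuleRight A E] [CompleteSpace E]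
    -- `𝒧` is a convex subset of `ℰ`
    (L : Set E) (hL : Convex ℝ L)
    (lam : ℕ → ℝ) (hlam : ∀ j, 0 < lam j) (hlam1 : HasSum lam 1)
    (ω : A →L[ℂ] ℂ) (ωs : ℕ → (A →L[ℂ] ℂ))
    (hpos : ∀ j (a : A), 0 ≤ a → 0 ≤ ωs j a)
    (hbdd : ∃ C : ℝ, ∀ j, ‖ωs j‖ ≤ C)
    (hω : ∀ a : A, HasSum (fun j => (lam j : ℂ) * ωs j a) (ω a))
    -- an abstract model of the localization `ℰ_ω`
    (F : Type*) [NormedAddCommGroup F] [InnerProductSpace ℂ F] [CompleteSpace F]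
    (ι : E →ₗ[ℂ] F) (hι : DenseRange ι)
    (hinner : ∀ x y : E, ⟪ι x, ι y⟫_ℂ = ω ⟪x, y⟫_A)
    -- abstract models of the localizations `ℰ_{ω_j}`
    (Fj : ℕ → Type*) [∀ j, NormedAddCommGroup (Fj j)] [∀ j, InnerProductSpace ℂ (Fj j)]
    [∀ j, CompleteSpace (Fj j)]
    (ιj : ∀ j, E →ₗ[ℂ] Fj j) (hιj : ∀ j, DenseRange (ιj j))
    (hinnerj : ∀ j (x y : E), ⟪ιj j x, ιj j y⟫_ℂ = ωs j ⟪x, y⟫_A)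
    -- the maps `φ_j`
    (φ : ∀ j, F →L[ℂ] Fj j) (hφ : ∀ j (x : E), φ j (ι x) = ιj j x) :
    closure (ι '' L) =
      {z : F | ∃ x : ℕ → E, (∀ k, x k ∈ L) ∧ (∃ C : ℝ, ∀ k, ‖ι (x k)‖ ≤ C) ∧
        ∀ j, Tendsto (fun k => ιj j (x k)) atTop (nhds (φ j z))} :=
  closure_image_eq_of_sigma_convex_combination_general L hL lam hlam ω ωs hω F ι hι hinner Fj ιj
    hinnerj φ hφ
end
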